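/- Let d ≥ 1, let α be a ℤ₂-(d−1)-cochain on the d-dimensional hypercube, and let 𝟙_top be the indicator ℤ₂-cochain of the top cell (•,…,•). Then (𝟙_top ∪_{d−1} α)(•,…,•) = Σ_{k=1}^{d} α(k̂_{ε(k)}), where k̂_ε denotes the (d−1)-cell whose k-th entry is ε and whose other entries are all •, and ε(k) is + if k is even and − if k is odd. -/

import Mathlib

/-- The three possible entries of a cell label of the hypercube:
`dot` = `•` (a spanned direction), `pls` = `+`, `mns` = `−`. -/
inductive Sgn : Type
  | dot : Sgn
  | pls : Sgn
  | mns : Sgn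
  deriving DecidableEq

instance : Fintype Sgn :=
  ⟨{Sgn.dot, Sgn.pls, Sgn.mns}, fun x => by cases x <;> simp⟩

/-- A cell of the `d`-dimensional hypercube, labeled by a tuple in `{•,+,−}^d`. -/
abbrev Cell (d : ℕ) := Fin d → Sgn

/-- A `ℤ₂`-cochain on the `d`-dimensional hypercube. -/
abbrev Cochain (d : ℕ) := Cell d → ZMod 2

/-- The top cell `(•,…,•)`. -/
def topCell (d : ℕ) : Cell d := fun _ => Sgn.dot

/-- The set of coordinates of a cell labeled `•`. -/
def dots {d : ℕ} (w : Cell d) : Finset (Fin d) :=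
  Finset.univ.filter (fun j => w j = Sgn.dot)

/-- The coboundary of a `ℤ₂`-cochain: `(δα)(w)` is the sum of `α` over all cells obtained
from `w` by replacing exactly one entry equal to `•` by `+` or by `−`. -/
def delta {d : ℕ} (α : Cochain d) : Cochain d := fun w =>
  ∑ j ∈ dots w, (α (Function.update w j Sgn.pls) + α (Function.update w j Sgn.mns))

/-- The set of coordinates where both `z` and `z'` are `•`. -/
def bothDot {d : ℕ} (z z' : Cell d) : Finset (Fin d) :=
  Finset.univ.filter (fun j => z j = Sgn.dot ∧ z' j = Sgn.dot)

/-- The allowed values of `(z_j, z'_j)` at a coordinate `j` not in the common-`•` set `I`: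
`(+,•)` or `(•,−)` when `ℓ(j) = #{i ∈ I : i < j}` is even, and `(−,•)` or `(•,+)` when it
is odd. -/
def pairCond {d : ℕ} (I : Finset (Fin d)) (j : Fin d) (a b : Sgn) : Prop :=
  if (I.filter (fun i => i < j)).card % 2 = 0 then
    (a = Sgn.pls ∧ b = Sgn.dot) ∨ (a = Sgn.dot ∧ b = Sgn.mns)
  else
    (a = Sgn.mns ∧ b = Sgn.dot) ∨ (a = Sgn.dot ∧ b = Sgn.pls)

/-- The pairs `(z,z')` appearing in the `m`-th higher cup product evaluated on the cell `w`:
the entries of `w` equal to `+` or `−` are fixed in both arguments, there are exactly `m`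
coordinates where both `z` and `z'` are `•`, and at the remaining `•`-coordinates of `w`
the parity condition `pairCond` holds. -/
def IntPair {d : ℕ} (m : ℕ) (w z z' : Cell d) : Prop :=
  (∀ j, w j ≠ Sgn.dot → z j = w j ∧ z' j = w j) ∧
    (bothDot z z').card = m ∧
    ∀ j, w j = Sgn.dot → j ∉ bothDot z z' → pairCond (bothDot z z') j (z j) (z' j)

open Classical in
/-- The finite set of pairs in `Int_m` relative to the cell `w`. -/
noncomputable def intPairs {d : ℕ} (m : ℕ) (w : Cell d) : Finset (Cell d × Cell d) :=
  Finset.univ.filter (fun p => IntPair m w p.1 p.2)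

/-- The higher cup product `α ∪_m β` of `ℤ₂`-cochains:
`(α ∪_m β)(w) = Σ_{(z,z') ∈ Int_m(w)} α(z)·β(z')`. -/
noncomputable def cup {d : ℕ} (m : ℕ) (α β : Cochain d) : Cochain d := fun w =>
  ∑ p ∈ intPairs m w, α p.1 * β p.2

/-- The `(d−1)`-cell `î_s` whose `i`-th entry is `s` and whose other entries are all `•`. -/
def hatCell {d : ℕ} (i : Fin d) (s : Sgn) : Cell d := fun j => if j = i then s else Sgn.dot

/-- `ε(t)`: the sign `+` if `t` is even and `−` if `t` is odd. -/
def eps (t : ℕ) : Sgn := if t % 2 = 0 then Sgn.pls else Sgn.mns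

/-- `α` is a `p`-cochain: it vanishes on all cells that are not `p`-cells. -/
def IsCochainOfDeg {d : ℕ} (p : ℕ) (α : Cochain d) : Prop :=
  ∀ w : Cell d, (dots w).card ≠ p → α w = 0

/-- The indicator cochain of a cell: value `1` on that cell and `0` elsewhere. -/
def indicator {d : ℕ} (c : Cell d) : Cochain d := fun w => if w = c then 1 else 0

/-!
Since `𝟙_top` vanishes off the top cell, only pairs `(top, z')` in `Int_{d-1}` contribute. For
these the common-`•` set is the `•`-set of `z'`, of size `d - 1`, so `z'` is `k̂_s` for a single
(0-based) coordinate `k`; there `ℓ(k) = k`, and the parity condition at `k` forces `s = ε(k + 1)`.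
-/

lemma eps_ne_dot (t : ℕ) : eps t ≠ Sgn.dot := by
  unfold eps; split <;> simp

lemma pairCond_dot_left_iff {d : ℕ} (I : Finset (Fin d)) (j : Fin d) (b : Sgn) :
    pairCond I j Sgn.dot b ↔ b = eps ((I.filter (fun i => i < j)).card + 1) := by
  unfold pairCond eps
  split_ifs <;> first | omega | simp

lemma bothDot_topCell_left {d : ℕ} (z' : Cell d) : bothDot (topCell d) z' = dots z' := by
  simp [bothDot, dots, topCell]

lemma dots_hatCell {d : ℕ} (k : Fin d) {s : Sgn} (hs : s ≠ Sgn.dot) :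
    dots (hatCell k s) = Finset.univ.erase k := by
  ext j
  by_cases h : j = k <;> simp [dots, hatCell, h, hs]

lemma eq_hatCell_of_dots_eq {d : ℕ} {z : Cell d} {k : Fin d} (h : dots z = Finset.univ.erase k) :
    z = hatCell k (z k) := by
  funext j
  by_cases hjk : j = k
  · simp [hatCell, hjk]
  · have hj : j ∈ dots z := h ▸ Finset.mem_erase.mpr ⟨hjk, Finset.mem_univ j⟩
    simpa [hatCell, hjk, dots] using hj

lemma hatCell_injective {d : ℕ} {s : Fin d → Sgn} (hs : ∀ k, s k ≠ Sgn.dot) :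
    Function.Injective (fun k => hatCell k (s k)) := by
  intro a b hab
  by_contra h
  have := congrFun hab a
  simp only [hatCell, if_neg h] at this
  exact hs a this

lemma card_filter_lt_univ_erase {d : ℕ} (k : Fin d) :
    ((Finset.univ.erase k).filter (fun i => i < k)).card = k.val := by
  have h : (Finset.univ.erase k).filter (fun i => i < k) = Finset.Iio k := by
    ext j
    simpa using fun (hj : j < k) => hj.ne
  rw [h, Fin.card_Iio]

lemma Finset.exists_eq_univ_erase_of_card_eq_sub_one {α : Type*} [Fintype α] [DecidableEq α]
    {s : Finset α} (hα : 1 ≤ Fintype.card α) (hs : s.card = Fintype.card α - 1) :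
    ∃ a, s = Finset.univ.erase a := by
  obtain ⟨a, ha⟩ := Finset.card_eq_one.mp (show sᶜ.card = 1 by rw [Finset.card_compl]; omega)
  exact ⟨a, by rw [← Finset.compl_singleton, ← ha, compl_compl]⟩

open Classical in
lemma cup_indicator_apply {d : ℕ} (m : ℕ) (c w : Cell d) (β : Cochain d) :
    cup m (indicator c) β w = ∑ z' ∈ Finset.univ.filter (IntPair m w c), β z' := by
  rw [cup, intPairs, Finset.sum_filter, Finset.sum_filter, Fintype.sum_prod_type,
    Fintype.sum_eq_single c fun z hz => by simp [indicator, hz]]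
  simp [indicator]

lemma intPair_topCell_iff {d : ℕ} (hd : 1 ≤ d) (z' : Cell d) :
    IntPair (d - 1) (topCell d) (topCell d) z' ↔ ∃ k : Fin d, z' = hatCell k (eps (k.val + 1)) := by
  simp only [IntPair, bothDot_topCell_left, topCell, ne_eq, not_true_eq_false, IsEmpty.forall_iff,
    implies_true, true_and, forall_const]
  constructor
  · rintro ⟨hcard, hpair⟩
    obtain ⟨k, hk⟩ := Finset.exists_eq_univ_erase_of_card_eq_sub_one (s := dots z')
      (by simpa using hd) (by simpa using hcard)
    have hzk := (pairCond_dot_left_iff _ _ _).mp (hpair k (by simp [hk]))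
    rw [hk, card_filter_lt_univ_erase] at hzk
    exact ⟨k, hzk ▸ eq_hatCell_of_dots_eq hk⟩
  · rintro ⟨k, rfl⟩
    have hdots := dots_hatCell k (eps_ne_dot (k.val + 1))
    refine ⟨by simp [hdots], fun j hj => ?_⟩
    obtain rfl : j = k := by simpa [hdots] using hj
    rw [pairCond_dot_left_iff, hdots, card_filter_lt_univ_erase]
    simp [hatCell]

theorem indicator_top_cup_d_sub_one (d : ℕ) (hd : 1 ≤ d) (α : Cochain d) :
    cup (d - 1) (indicator (topCell d)) α (topCell d)
      = ∑ k : Fin d, α (hatCell k (eps (k.val + 1))) := by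
  classical
  have hpairs : Finset.univ.filter (IntPair (d - 1) (topCell d) (topCell d))
      = Finset.univ.image (fun k : Fin d => hatCell k (eps (k.val + 1))) := by
    ext z'
    simp [intPair_topCell_iff hd, eq_comm]
  rw [cup_indicator_apply, hpairs,
    Finset.sum_image (hatCell_injective fun k => eps_ne_dot (k.val + 1)).injOn]
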